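/- arXiv:2011.14935 — 4 statements merged into one kernel-verified Lean document; each statement's English description precedes it below -/
import Mathlib

section
/- Stability theorem for bosonic BdG systems (Theorem 1, quantitative content): let A₁ and A₂ be Hermitian n×n complex matrices, B₁ an n×n complex matrix, E a nonzero real number, and ψ_p, ψ_h ∈ ℂⁿ with A₁ ψ_p = E ψ_p and A₂* ψ_h = −E ψ_h. Then the first-order degenerate-perturbation matrix [[0, b], [−b̄, 0]], where b = ψ_p† B₁ ψ_h, has exactly the eigenvalues +i|E⁽¹⁾| and −i|E⁽¹⁾| with |E⁽¹⁾| = |ψ_p† ⌈A, B⌋ ψ_h| / (2|E|), so the degenerate level E splits into the complex-conjugate pair E ± i|E⁽¹⁾|; in particular the splitting is purely imaginary and vanishes if and only if the transition is forbidden, i.e. ψ_p† ⌈A, B⌋ ψ_h = 0. -/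
/-!
Since `A₁` is Hermitian, `ψ_p†` is a left eigenvector of `A₁` with the real eigenvalue `E`, while
`ψ_h` is a right eigenvector of `A₂*` with eigenvalue `-E`; hence
`ψ_p† (A₁B₁ - B₁A₂*) ψ_h = 2E b` and `|E⁽¹⁾| = |b|`. The characteristic polynomial of
`[[0, b], [-b̄, 0]]` is `λ² + |b|²`, whose roots are `±i|b|`.
-/

open Matrix

theorem Matrix.exists_mulVec_eq_smul_iff_det_eq_zero {ι R : Type*} [Fintype ι] [DecidableEq ι]
    [CommRing R] [IsDomain R] (M : Matrix ι ι R) (lam : R) :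
    (∃ v ≠ 0, M *ᵥ v = lam • v) ↔ (scalar ι lam - M).det = 0 := by
  rw [← exists_mulVec_eq_zero_iff]
  simp only [sub_mulVec, scalar_apply, ← smul_one_eq_diagonal, smul_mulVec, one_mulVec,
    sub_eq_zero, eq_comm]

theorem Complex.sq_add_sq_eq_zero_iff (z : ℂ) (r : ℝ) :
    z ^ 2 + (r : ℂ) ^ 2 = 0 ↔ z = Complex.I * r ∨ z = -(Complex.I * r) := by
  rw [← sq_eq_sq_iff_eq_or_eq_neg, mul_pow, Complex.I_sq, neg_one_mul, add_eq_zero_iff_eq_neg]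

theorem Matrix.exists_mulVec_eq_smul_iff_fin_two_skewHermitian (b lam : ℂ) :
    (∃ v ≠ 0, !![0, b; -(starRingEnd ℂ b), 0] *ᵥ v = lam • v) ↔
      lam = Complex.I * ‖b‖ ∨ lam = -(Complex.I * ‖b‖) := by
  have hcharMatrix : scalar (Fin 2) lam - !![0, b; -(starRingEnd ℂ b), 0] =
      !![lam, -b; starRingEnd ℂ b, lam] := by
    ext i j; fin_cases i <;> fin_cases j <;> simp
  rw [exists_mulVec_eq_smul_iff_det_eq_zero, hcharMatrix, det_fin_two_of,
    ← Complex.sq_add_sq_eq_zero_iff, ← Complex.mul_conj']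
  ring_nf

section Commutator

variable {ι 𝕜 : Type*} [Fintype ι] [RCLike 𝕜]

theorem Matrix.IsHermitian.star_vecMul_eq_smul {A : Matrix ι ι 𝕜} (hA : A.IsHermitian)
    {ψ : ι → 𝕜} {E : ℝ} (hψ : A *ᵥ ψ = (E : 𝕜) • ψ) :
    star ψ ᵥ* A = (E : 𝕜) • star ψ := by
  rw [← hA.eq, ← star_mulVec, hψ, star_smul, RCLike.star_def, RCLike.conj_ofReal]

theorem Matrix.star_dotProduct_commutator_mulVec {A₁ A₂ B : Matrix ι ι 𝕜} (hA₁ : A₁.IsHermitian)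
    {ψp ψh : ι → 𝕜} {E : ℝ} (hψp : A₁ *ᵥ ψp = (E : 𝕜) • ψp)
    (hψh : A₂ *ᵥ ψh = (-E : 𝕜) • ψh) :
    star ψp ⬝ᵥ (A₁ * B - B * A₂) *ᵥ ψh = 2 * E * (star ψp ⬝ᵥ B *ᵥ ψh) := by
  rw [sub_mulVec, dotProduct_sub, ← mulVec_mulVec, ← mulVec_mulVec, dotProduct_mulVec,
    hA₁.star_vecMul_eq_smul hψp, hψh, smul_dotProduct, mulVec_smul, dotProduct_smul,
    smul_eq_mul, smul_eq_mul]
  ring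

end Commutator

theorem bdg_stability_theorem_general {n : ℕ}
    (A₁ A₂ B₁ : Matrix (Fin n) (Fin n) ℂ)
    (hA₁ : A₁.IsHermitian)
    (E : ℝ) (hE : E ≠ 0) (ψp ψh : Fin n → ℂ)
    (hψp : A₁.mulVec ψp = (E : ℂ) • ψp)
    (hψh : (A₂.map (starRingEnd ℂ)).mulVec ψh = (-E : ℂ) • ψh)
    (b : ℂ) (hb : b = star ψp ⬝ᵥ B₁.mulVec ψh)
    (M : Matrix (Fin 2) (Fin 2) ℂ)
    (hM : M = !![0, b; -(starRingEnd ℂ b), 0])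
    (E1 : ℝ)
    (hE1 : E1 = ‖star ψp ⬝ᵥ (A₁ * B₁ - B₁ * A₂.map (starRingEnd ℂ)).mulVec ψh‖
                  / (2 * |E|)) :
    (∀ lam : ℂ,
      (∃ v : Fin 2 → ℂ, v ≠ 0 ∧ M.mulVec v = lam • v) ↔
        (lam = Complex.I * E1 ∨ lam = -(Complex.I * E1))) ∧
    (E1 = 0 ↔ star ψp ⬝ᵥ (A₁ * B₁ - B₁ * A₂.map (starRingEnd ℂ)).mulVec ψh = 0) := by
  have hcomm := Matrix.star_dotProduct_commutator_mulVec (B := B₁) hA₁ hψp hψh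
  rw [← hb] at hcomm
  have hE1b : E1 = ‖b‖ := by
    rw [hE1, hcomm, norm_mul, norm_mul, RCLike.norm_ofReal, Complex.norm_two]
    field_simp
  subst hM
  refine ⟨fun lam => hE1b ▸ exists_mulVec_eq_smul_iff_fin_two_skewHermitian b lam, ?_⟩
  rw [hE1b, hcomm, norm_eq_zero]
  simp [hE]

/-- **Stability theorem for bosonic BdG systems (quantitative form).**
Let `A₁ ψ_p = E ψ_p`, `A₂* ψ_h = -E ψ_h` with `A₁, A₂` Hermitian and `E ≠ 0` real.
Setting `b = ψ_p† B₁ ψ_h` and `|E⁽¹⁾| = |ψ_p† (A₁B₁ - B₁A₂*) ψ_h| / (2|E|)`, the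
first-order degenerate-perturbation matrix `[[0, b], [-conj b, 0]]` has exactly the
eigenvalues `+i|E⁽¹⁾|` and `-i|E⁽¹⁾|` (so the level `E` splits into the complex
conjugate pair `E ± i|E⁽¹⁾|`), and the splitting vanishes iff the transition is
forbidden: `ψ_p† (A₁B₁ - B₁A₂*) ψ_h = 0`. -/
theorem bdg_stability_theorem {n : ℕ}
    (A₁ A₂ B₁ : Matrix (Fin n) (Fin n) ℂ)
    (hA₁ : A₁.IsHermitian) (hA₂ : A₂.IsHermitian)
    (E : ℝ) (hE : E ≠ 0) (ψp ψh : Fin n → ℂ)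
    (hψp : A₁.mulVec ψp = (E : ℂ) • ψp)
    (hψh : (A₂.map (starRingEnd ℂ)).mulVec ψh = (-E : ℂ) • ψh)
    (b : ℂ) (hb : b = star ψp ⬝ᵥ B₁.mulVec ψh)
    (M : Matrix (Fin 2) (Fin 2) ℂ)
    (hM : M = !![0, b; -(starRingEnd ℂ b), 0])
    (E1 : ℝ)
    (hE1 : E1 = ‖star ψp ⬝ᵥ (A₁ * B₁ - B₁ * A₂.map (starRingEnd ℂ)).mulVec ψh‖
                  / (2 * |E|)) :
    (∀ lam : ℂ,
      (∃ v : Fin 2 → ℂ, v ≠ 0 ∧ M.mulVec v = lam • v) ↔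
        (lam = Complex.I * E1 ∨ lam = -(Complex.I * E1))) ∧
    (E1 = 0 ↔ star ψp ⬝ᵥ (A₁ * B₁ - B₁ * A₂.map (starRingEnd ℂ)).mulVec ψh = 0) :=
  bdg_stability_theorem_general A₁ A₂ B₁ hA₁ E hE ψp ψh hψp hψh b hb M hM E1 hE1
end

section
/- The square of the bosonic BdG Hamiltonian H = [[A₁, B₁], [−B₂*, −A₂*]] is a Hermitian matrix if and only if the unconventional commutator vanishes: H² = (H²)† if and only if ⌈A, B⌋ := A₁B₁ − B₁A₂* = 0. -/
/-!
Since `B₂* = B₁ᴴ`, the Hamiltonian has the shape `[[A, B], [-Bᴴ, -D]]` with `A` and `D`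
Hermitian. Its square has Hermitian diagonal blocks `A² - BBᴴ` and `D² - BᴴB`, upper-right block
`X = AB - BD` and lower-left block `-Xᴴ`. Hermiticity of the square thus asks `Xᴴ = -Xᴴ`, which
over an additively torsion-free ring such as `ℂ` means `X = 0`.
-/

open Matrix

namespace Matrix

variable {m n α : Type*}

instance [AddMonoid α] [IsAddTorsionFree α] : IsAddTorsionFree (Matrix m n α) :=
  inferInstanceAs (IsAddTorsionFree (m → n → α))

section BosonicBlocks

variable [Fintype m] [Fintype n] [Ring α] [StarRing α]

theorem fromBlocks_neg_conjTranspose_mul_self {A : Matrix m m α} {D : Matrix n n α}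
    (hA : A.IsHermitian) (hD : D.IsHermitian) (B : Matrix m n α) :
    fromBlocks A B (-Bᴴ) (-D) * fromBlocks A B (-Bᴴ) (-D) =
      fromBlocks (A * A - B * Bᴴ) (A * B - B * D) (-(A * B - B * D)ᴴ) (D * D - Bᴴ * B) := by
  rw [fromBlocks_multiply, conjTranspose_sub, conjTranspose_mul, conjTranspose_mul, hA.eq, hD.eq]
  congr 1 <;> simp only [Matrix.mul_neg, Matrix.neg_mul, neg_neg, neg_sub] <;> abel

theorem isHermitian_fromBlocks_neg_conjTranspose_mul_self_iff [IsAddTorsionFree α]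
    {A : Matrix m m α} {D : Matrix n n α} (hA : A.IsHermitian) (hD : D.IsHermitian)
    (B : Matrix m n α) :
    (fromBlocks A B (-Bᴴ) (-D) * fromBlocks A B (-Bᴴ) (-D)).IsHermitian ↔
      A * B - B * D = 0 := by
  have hAA : (A * A - B * Bᴴ).IsHermitian :=
    (hA.eq ▸ isHermitian_conjTranspose_mul_self A).sub (isHermitian_mul_conjTranspose_self B)
  have hDD : (D * D - Bᴴ * B).IsHermitian :=
    (hD.eq ▸ isHermitian_conjTranspose_mul_self D).sub (isHermitian_conjTranspose_mul_self B)
  rw [fromBlocks_neg_conjTranspose_mul_self hA hD, isHermitian_fromBlocks_iff,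
    conjTranspose_neg, conjTranspose_conjTranspose, self_eq_neg, neg_eq_self,
    conjTranspose_eq_zero]
  exact ⟨fun h => h.2.1, fun h => ⟨hAA, h, h, hDD⟩⟩

end BosonicBlocks

end Matrix

/-- **Hermiticity criterion for the square of the bosonic BdG Hamiltonian.**
With `H = [[A₁, B₁], [-B₂*, -A₂*]]`, the square `H²` is Hermitian if and only if the
unconventional commutator vanishes: `⌈A,B⌋ = A₁B₁ - B₁A₂* = 0`. -/
theorem bdg_square_hermitian_iff_commutator_vanishes {n : ℕ}
    (A₁ A₂ B₁ B₂ : Matrix (Fin n) (Fin n) ℂ)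
    (hA₁ : A₁.IsHermitian) (hA₂ : A₂.IsHermitian) (hB : B₁ = B₂ᵀ)
    (H : Matrix (Fin n ⊕ Fin n) (Fin n ⊕ Fin n) ℂ)
    (hH : H = Matrix.fromBlocks A₁ B₁ (-(B₂.map (starRingEnd ℂ))) (-(A₂.map (starRingEnd ℂ)))) :
    (H * H).IsHermitian ↔ A₁ * B₁ - B₁ * A₂.map (starRingEnd ℂ) = 0 := by
  have hB₂ : B₂.map (starRingEnd ℂ) = B₁ᴴ := by rw [hB, transpose_conjTranspose]; rfl
  have hA₂conj : (A₂.map (starRingEnd ℂ)).IsHermitian := by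
    show A₂ᴴᵀ.IsHermitian
    exact hA₂.eq.symm ▸ hA₂.transpose
  rw [hH, hB₂]
  exact isHermitian_fromBlocks_neg_conjTranspose_mul_self_iff hA₁ hA₂conj B₁
end

section
/- For the BdG extension of the spinful Haldane model on a stripe, the unconventional commutator evaluates to ⌈A, B⌋ := A(k)B − B A(−k) = 4i t₂ n_B c₂ cos φ · [cos(k/2)(I₊ + I₋) + cos(k) I₀] ⊗ (s_y ⊗ σ_z). In particular ⌈A, B⌋ vanishes for all k, t₁, t₂, m, q, n_B, c₂ if and only if cos φ = 0 (taking t₂ n_B c₂ ≠ 0), and since A(k) is real this coincides with A(k)B(k) − B(k)A*(−k). -/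
open Matrix Kronecker

namespace BdGHaldane

/-- Pauli matrix σ_x. -/
def sigx : Matrix (Fin 2) (Fin 2) ℂ := !![0, 1; 1, 0]
/-- Pauli matrix σ_y. -/
def sigy : Matrix (Fin 2) (Fin 2) ℂ := !![0, -Complex.I; Complex.I, 0]
/-- Pauli matrix σ_z. -/
def sigz : Matrix (Fin 2) (Fin 2) ℂ := !![1, 0; 0, -1]
/-- Identity σ₀. -/
def sig0 : Matrix (Fin 2) (Fin 2) ℂ := 1
/-- Raising matrix σ₊ = (σ_x + iσ_y)/2. -/
noncomputable def sigp : Matrix (Fin 2) (Fin 2) ℂ := (2 : ℂ)⁻¹ • (sigx + Complex.I • sigy)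
/-- Lowering matrix σ₋ = (σ_x − iσ_y)/2. -/
noncomputable def sigm : Matrix (Fin 2) (Fin 2) ℂ := (2 : ℂ)⁻¹ • (sigx - Complex.I • sigy)

/-- `I₊`: the `N × N` matrix with ones on the superdiagonal. -/
def Isup (N : ℕ) : Matrix (Fin N) (Fin N) ℂ :=
  Matrix.of fun i j => if (i : ℕ) + 1 = (j : ℕ) then 1 else 0

/-- `α(k) = 2t₂cos(φ + k/2) s_z⊗σ_z − t₁ s₀⊗σ₊`. -/
noncomputable def alphaM (t₁ t₂ φ k : ℝ) : Matrix (Fin 2 × Fin 2) (Fin 2 × Fin 2) ℂ :=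
  ((2 * t₂ * Real.cos (φ + k / 2) : ℝ) : ℂ) • (sigz ⊗ₖ sigz) - ((t₁ : ℝ) : ℂ) • (sig0 ⊗ₖ sigp)

/-- `β(k) = 2t₂cos(φ − k) s_z⊗σ_z + m s₀⊗σ_z + q s₀⊗σ₀ − t₁cos(k/2) s₀⊗σ_x`. -/
noncomputable def betaM (t₁ t₂ φ m q k : ℝ) : Matrix (Fin 2 × Fin 2) (Fin 2 × Fin 2) ℂ :=
  ((2 * t₂ * Real.cos (φ - k) : ℝ) : ℂ) • (sigz ⊗ₖ sigz) + ((m : ℝ) : ℂ) • (sig0 ⊗ₖ sigz)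
    + ((q : ℝ) : ℂ) • (sig0 ⊗ₖ sig0) - ((t₁ * Real.cos (k / 2) : ℝ) : ℂ) • (sig0 ⊗ₖ sigx)

/-- `γ(k) = 2t₂cos(φ + k/2) s_z⊗σ_z − t₁ s₀⊗σ₋`. -/
noncomputable def gammaM (t₁ t₂ φ k : ℝ) : Matrix (Fin 2 × Fin 2) (Fin 2 × Fin 2) ℂ :=
  ((2 * t₂ * Real.cos (φ + k / 2) : ℝ) : ℂ) • (sigz ⊗ₖ sigz) - ((t₁ : ℝ) : ℂ) • (sig0 ⊗ₖ sigm)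

/-- `ξ = n_B c₂ s_x⊗σ₀`. -/
def xiM (nB c₂ : ℝ) : Matrix (Fin 2 × Fin 2) (Fin 2 × Fin 2) ℂ :=
  ((nB * c₂ : ℝ) : ℂ) • (sigx ⊗ₖ sig0)

/-- `A(k) = I₋⊗α(k) + I₀⊗β(k) + I₊⊗γ(k)` on a stripe with `N_y` unit cells. -/
noncomputable def AM (N : ℕ) (t₁ t₂ φ m q k : ℝ) :
    Matrix (Fin N × (Fin 2 × Fin 2)) (Fin N × (Fin 2 × Fin 2)) ℂ :=
  (Isup N)ᵀ ⊗ₖ alphaM t₁ t₂ φ k + (1 : Matrix (Fin N) (Fin N) ℂ) ⊗ₖ betaM t₁ t₂ φ m q k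
    + Isup N ⊗ₖ gammaM t₁ t₂ φ k

/-- `B = I₀⊗ξ`. -/
def BM (N : ℕ) (nB c₂ : ℝ) :
    Matrix (Fin N × (Fin 2 × Fin 2)) (Fin N × (Fin 2 × Fin 2)) ℂ :=
  (1 : Matrix (Fin N) (Fin N) ℂ) ⊗ₖ xiM nB c₂

/-!
The Pauli product `s_z⊗σ_z` anticommutes with `ξ ∝ s_x⊗σ₀`, whereas every `s₀⊗X` commutes
with it. Hence in `α(k)ξ − ξα(−k)` (and likewise for `β`, `γ`) only the `s_z⊗σ_z` coefficients
survive, and they add up: `cos(φ + k/2) + cos(φ − k/2) = 2 cos φ cos(k/2)` and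
`cos(φ − k) + cos(φ + k) = 2 cos φ cos k`. Since `B` is block diagonal, the commutator of the
stripe is the block-tridiagonal matrix of these block commutators. Its entry at
`((i,0,0),(i,1,0))` is `4 t₂ n_B c₂ cos φ cos k`, which gives the vanishing criterion; and `A(k)`
is real because all its ingredients are (`σ_y` only enters through `σ_±`).
-/

theorem _root_.Matrix.kronecker_sub {R l m n p : Type*} [NonUnitalNonAssocRing R]
    (A : Matrix l m R) (B₁ B₂ : Matrix n p R) :
    A ⊗ₖ (B₁ - B₂) = A ⊗ₖ B₁ - A ⊗ₖ B₂ := by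
  ext ⟨i, i'⟩ ⟨j, j'⟩
  simp [mul_sub]

theorem tridiag_kronecker_mul_one_kronecker_sub {R l n : Type*} [CommRing R]
    [Fintype l] [DecidableEq l] [Fintype n] (L D U : Matrix l l R)
    (a b c a' b' c' x : Matrix n n R) :
    (L ⊗ₖ a + D ⊗ₖ b + U ⊗ₖ c) * (1 ⊗ₖ x) - (1 ⊗ₖ x) * (L ⊗ₖ a' + D ⊗ₖ b' + U ⊗ₖ c')
      = L ⊗ₖ (a * x - x * a') + D ⊗ₖ (b * x - x * b') + U ⊗ₖ (c * x - x * c') := by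
  simp only [add_mul, mul_add, ← mul_kronecker_mul, Matrix.one_mul, Matrix.mul_one, kronecker_sub]
  abel

theorem sigz_mul_sigx : sigz * sigx = Complex.I • sigy := by
  ext i j; fin_cases i <;> fin_cases j <;> simp [sigz, sigx, sigy, Matrix.mul_apply]

theorem sigx_mul_sigz : sigx * sigz = -Complex.I • sigy := by
  ext i j; fin_cases i <;> fin_cases j <;> simp [sigz, sigx, sigy, Matrix.mul_apply]

theorem smul_szsz_add_sig0_kronecker_mul_xiM_sub (a b : ℂ) (X : Matrix (Fin 2) (Fin 2) ℂ)
    (nB c₂ : ℝ) :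
    (a • (sigz ⊗ₖ sigz) + sig0 ⊗ₖ X) * xiM nB c₂ - xiM nB c₂ * (b • (sigz ⊗ₖ sigz) + sig0 ⊗ₖ X)
      = (Complex.I * ((nB * c₂ : ℝ) : ℂ) * (a + b)) • (sigy ⊗ₖ sigz) := by
  simp only [xiM, add_mul, mul_add, Matrix.smul_mul, Matrix.mul_smul, ← mul_kronecker_mul,
    sigz_mul_sigx, sigx_mul_sigz, sig0, Matrix.one_mul, Matrix.mul_one, smul_kronecker]
  module

theorem cos_add_add_cos_sub (φ x : ℝ) :
    Real.cos (φ + x) + Real.cos (φ - x) = 2 * Real.cos φ * Real.cos x := by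
  rw [Real.cos_add, Real.cos_sub]; ring

theorem alphaM_eq (t₁ t₂ φ k : ℝ) : alphaM t₁ t₂ φ k
    = ((2 * t₂ * Real.cos (φ + k / 2) : ℝ) : ℂ) • (sigz ⊗ₖ sigz) + sig0 ⊗ₖ (-(t₁ : ℂ) • sigp) := by
  rw [alphaM, kronecker_smul, neg_smul, sub_eq_add_neg]

theorem gammaM_eq (t₁ t₂ φ k : ℝ) : gammaM t₁ t₂ φ k
    = ((2 * t₂ * Real.cos (φ + k / 2) : ℝ) : ℂ) • (sigz ⊗ₖ sigz) + sig0 ⊗ₖ (-(t₁ : ℂ) • sigm) := by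
  rw [gammaM, kronecker_smul, neg_smul, sub_eq_add_neg]

theorem betaM_eq (t₁ t₂ φ m q k : ℝ) : betaM t₁ t₂ φ m q k
    = ((2 * t₂ * Real.cos (φ - k) : ℝ) : ℂ) • (sigz ⊗ₖ sigz)
      + sig0 ⊗ₖ ((m : ℂ) • sigz + (q : ℂ) • sig0 - ((t₁ * Real.cos (k / 2) : ℝ) : ℂ) • sigx) := by
  simp only [betaM, kronecker_sub, kronecker_add, kronecker_smul]
  abel

theorem cos_smul_szsz_add_sig0_kronecker_mul_xiM_sub (t₂ φ x nB c₂ : ℝ)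
    (X : Matrix (Fin 2) (Fin 2) ℂ) :
    (((2 * t₂ * Real.cos (φ + x) : ℝ) : ℂ) • (sigz ⊗ₖ sigz) + sig0 ⊗ₖ X) * xiM nB c₂
        - xiM nB c₂ * (((2 * t₂ * Real.cos (φ - x) : ℝ) : ℂ) • (sigz ⊗ₖ sigz) + sig0 ⊗ₖ X)
      = (Complex.I * ((4 * t₂ * nB * c₂ * Real.cos φ : ℝ) : ℂ) * (Real.cos x : ℂ))
          • (sigy ⊗ₖ sigz) := by
  rw [smul_szsz_add_sig0_kronecker_mul_xiM_sub]
  have hsum := congrArg Complex.ofReal (cos_add_add_cos_sub φ x)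
  congr 1
  push_cast at hsum ⊢
  linear_combination (2 * t₂ * nB * c₂ * Complex.I) * hsum

theorem alphaM_mul_xiM_sub_xiM_mul_alphaM_neg (t₁ t₂ φ nB c₂ k : ℝ) :
    alphaM t₁ t₂ φ k * xiM nB c₂ - xiM nB c₂ * alphaM t₁ t₂ φ (-k)
      = (Complex.I * ((4 * t₂ * nB * c₂ * Real.cos φ : ℝ) : ℂ) * (Real.cos (k / 2) : ℂ))
          • (sigy ⊗ₖ sigz) := by
  rw [alphaM_eq, alphaM_eq, neg_div, ← sub_eq_add_neg, cos_smul_szsz_add_sig0_kronecker_mul_xiM_sub]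

theorem gammaM_mul_xiM_sub_xiM_mul_gammaM_neg (t₁ t₂ φ nB c₂ k : ℝ) :
    gammaM t₁ t₂ φ k * xiM nB c₂ - xiM nB c₂ * gammaM t₁ t₂ φ (-k)
      = (Complex.I * ((4 * t₂ * nB * c₂ * Real.cos φ : ℝ) : ℂ) * (Real.cos (k / 2) : ℂ))
          • (sigy ⊗ₖ sigz) := by
  rw [gammaM_eq, gammaM_eq, neg_div, ← sub_eq_add_neg, cos_smul_szsz_add_sig0_kronecker_mul_xiM_sub]

theorem betaM_mul_xiM_sub_xiM_mul_betaM_neg (t₁ t₂ φ m q nB c₂ k : ℝ) :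
    betaM t₁ t₂ φ m q k * xiM nB c₂ - xiM nB c₂ * betaM t₁ t₂ φ m q (-k)
      = (Complex.I * ((4 * t₂ * nB * c₂ * Real.cos φ : ℝ) : ℂ) * (Real.cos k : ℂ))
          • (sigy ⊗ₖ sigz) := by
  rw [betaM_eq, betaM_eq, neg_div, Real.cos_neg, sub_eq_add_neg φ k,
    cos_smul_szsz_add_sig0_kronecker_mul_xiM_sub, Real.cos_neg]

theorem AM_mul_BM_sub_BM_mul_AM_neg (N : ℕ) (t₁ t₂ φ m q nB c₂ k : ℝ) :
    AM N t₁ t₂ φ m q k * BM N nB c₂ - BM N nB c₂ * AM N t₁ t₂ φ m q (-k)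
      = (Complex.I * ((4 * t₂ * nB * c₂ * Real.cos φ : ℝ) : ℂ)) •
          ((((Real.cos (k / 2) : ℝ) : ℂ) • (Isup N + (Isup N)ᵀ)
            + ((Real.cos k : ℝ) : ℂ) • (1 : Matrix (Fin N) (Fin N) ℂ)) ⊗ₖ (sigy ⊗ₖ sigz)) := by
  rw [AM, AM, BM, tridiag_kronecker_mul_one_kronecker_sub,
    alphaM_mul_xiM_sub_xiM_mul_alphaM_neg, betaM_mul_xiM_sub_xiM_mul_betaM_neg,
    gammaM_mul_xiM_sub_xiM_mul_gammaM_neg]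
  simp only [kronecker_smul, smul_kronecker, add_kronecker, smul_add, smul_smul]
  module

theorem AM_mul_BM_sub_BM_mul_AM_neg_apply (N : ℕ) (t₁ t₂ φ m q nB c₂ k : ℝ) (i : Fin N) :
    (AM N t₁ t₂ φ m q k * BM N nB c₂ - BM N nB c₂ * AM N t₁ t₂ φ m q (-k)) (i, 0, 0) (i, 1, 0)
      = ((4 * t₂ * nB * c₂ * Real.cos φ * Real.cos k : ℝ) : ℂ) := by
  rw [AM_mul_BM_sub_BM_mul_AM_neg]
  simp [Isup, sigy, sigz]
  linear_combination (-(4 * t₂ * nB * c₂ * Complex.cos φ * Complex.cos k)) * Complex.I_sq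

theorem map_conj_kronecker {l m n p : Type*} (A : Matrix l m ℂ) (B : Matrix n p ℂ) :
    (A ⊗ₖ B).map (starRingEnd ℂ) = A.map (starRingEnd ℂ) ⊗ₖ B.map (starRingEnd ℂ) := by
  ext ⟨i, i'⟩ ⟨j, j'⟩
  simp

theorem map_conj_ofReal_smul {m n : Type*} (r : ℝ) (A : Matrix m n ℂ) :
    ((r : ℂ) • A).map (starRingEnd ℂ) = (r : ℂ) • A.map (starRingEnd ℂ) := by
  ext i j
  simp

theorem sigx_map_conj : sigx.map (starRingEnd ℂ) = sigx := by
  ext i j; fin_cases i <;> fin_cases j <;> simp [sigx]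

theorem sigz_map_conj : sigz.map (starRingEnd ℂ) = sigz := by
  ext i j; fin_cases i <;> fin_cases j <;> simp [sigz]

theorem sig0_map_conj : sig0.map (starRingEnd ℂ) = sig0 :=
  Matrix.map_one _ (map_zero _) (map_one _)

theorem sigp_map_conj : sigp.map (starRingEnd ℂ) = sigp := by
  ext i j; fin_cases i <;> fin_cases j <;> simp [sigp, sigx, sigy, map_ofNat]

theorem sigm_map_conj : sigm.map (starRingEnd ℂ) = sigm := by
  ext i j; fin_cases i <;> fin_cases j <;> simp [sigm, sigx, sigy, map_ofNat]

theorem Isup_map_conj (N : ℕ) : (Isup N).map (starRingEnd ℂ) = Isup N := by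
  ext i j; simp [Isup, apply_ite]

theorem AM_map_conj (N : ℕ) (t₁ t₂ φ m q k : ℝ) :
    (AM N t₁ t₂ φ m q k).map (starRingEnd ℂ) = AM N t₁ t₂ φ m q k := by
  simp only [AM, alphaM, betaM, gammaM, Matrix.map_add _ (map_add _),
    Matrix.map_sub _ (map_sub _), map_conj_kronecker, map_conj_ofReal_smul, transpose_map,
    Matrix.map_one _ (map_zero _) (map_one _), sigx_map_conj, sigz_map_conj, sig0_map_conj,
    sigp_map_conj, sigm_map_conj, Isup_map_conj]

/-- **Unconventional commutator of the BdG spinful Haldane stripe model.**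
`⌈A,B⌋ = A(k)B − B A(−k) = 4i t₂ n_B c₂ cos φ · [cos(k/2)(I₊+I₋) + cos k I₀] ⊗ (s_y⊗σ_z)`;
it vanishes for all `k, t₁, m, q` (with `t₂ n_B c₂ ≠ 0`) iff `cos φ = 0`; and since
`A(k)` is real this coincides with `A(k)B(k) − B(k)A*(−k)`. -/
theorem unconventional_commutator_haldane_stripe (N : ℕ) (hN : 0 < N) :
    (∀ t₁ t₂ φ m q nB c₂ k : ℝ,
      AM N t₁ t₂ φ m q k * BM N nB c₂ - BM N nB c₂ * AM N t₁ t₂ φ m q (-k)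
        = (Complex.I * ((4 * t₂ * nB * c₂ * Real.cos φ : ℝ) : ℂ)) •
            ((((Real.cos (k / 2) : ℝ) : ℂ) • (Isup N + (Isup N)ᵀ)
              + ((Real.cos k : ℝ) : ℂ) • (1 : Matrix (Fin N) (Fin N) ℂ)) ⊗ₖ (sigy ⊗ₖ sigz)))
    ∧ (∀ t₂ φ nB c₂ : ℝ, t₂ * nB * c₂ ≠ 0 →
        ((∀ t₁ m q k : ℝ,
          AM N t₁ t₂ φ m q k * BM N nB c₂ - BM N nB c₂ * AM N t₁ t₂ φ m q (-k) = 0)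
          ↔ Real.cos φ = 0))
    ∧ (∀ t₁ t₂ φ m q nB c₂ k : ℝ,
        AM N t₁ t₂ φ m q k * BM N nB c₂
            - BM N nB c₂ * (AM N t₁ t₂ φ m q (-k)).map (starRingEnd ℂ)
          = AM N t₁ t₂ φ m q k * BM N nB c₂ - BM N nB c₂ * AM N t₁ t₂ φ m q (-k)) := by
  refine ⟨AM_mul_BM_sub_BM_mul_AM_neg N, fun t₂ φ nB c₂ hne => ⟨fun hvanish => ?_, ?_⟩, ?_⟩
  · have hentry := AM_mul_BM_sub_BM_mul_AM_neg_apply N 0 t₂ φ 0 0 nB c₂ 0 ⟨0, hN⟩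
    rw [hvanish 0 0 0 0, Matrix.zero_apply, Real.cos_zero, mul_one, eq_comm,
      Complex.ofReal_eq_zero, show 4 * t₂ * nB * c₂ = 4 * (t₂ * nB * c₂) by ring] at hentry
    exact (mul_eq_zero.1 hentry).resolve_left (mul_ne_zero four_ne_zero hne)
  · intro hcos t₁ m q k
    simp [AM_mul_BM_sub_BM_mul_AM_neg, hcos]
  · intro t₁ t₂ φ m q nB c₂ k
    rw [AM_map_conj]

end BdGHaldane
end

section
/- Let A be a Hermitian n×n complex matrix and c a real scalar. Then the spectrum of the 2n×2n Nambu matrix M = [[A, cI], [−cI, −A]] is exactly {λ ∈ ℂ : λ² = ω² − c² for some eigenvalue ω of A}; that is, λ is an eigenvalue of M if and only if there exists an eigenvalue ω of A with λ² = ω² − c². (This is the spectrum E_n(k) = ±√(ω_n(k)² − n_B²c₂²) of the ⇑ sector of the time-reversal-symmetric BdG model.) -/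
/-!
Conjugating by the swap of the two halves turns `M` into `-M`, so `det (λ - M) = det (λ + M)` and
`det (λ - M) ^ 2 = det (λ² - M²)`. Since `cI` commutes with `A`, the cross terms of `M²` cancel
and `M² = (A² - c²) ⊕ (A² - c²)`, whence `det (λ - M) ^ 2 = det ((λ² + c²) - A²) ^ 2`. Finally,
choosing `s` with `s² = λ² + c²`, `(λ² + c²) - A² = (s - A)(s + A)` is singular iff `s` or `-s`
is an eigenvalue of `A`.
-/

open Matrix

namespace Matrix

variable {ι R K : Type*} [Fintype ι] [DecidableEq ι]

theorem exists_mulVec_eq_smul_iff_det_smul_one_sub_eq_zero [Field K] (A : Matrix ι ι K) (μ : K) :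
    (∃ v ≠ 0, A *ᵥ v = μ • v) ↔ (μ • 1 - A).det = 0 := by
  rw [← exists_mulVec_eq_zero_iff]
  refine exists_congr fun v => and_congr_right fun _ => ?_
  rw [sub_mulVec, smul_mulVec, one_mulVec, sub_eq_zero, eq_comm]

section CommRing

variable [CommRing R]

theorem smul_one_sub_mul_smul_one_add (A : Matrix ι ι R) (s : R) :
    (s • 1 - A) * (s • 1 + A) = s ^ 2 • 1 - A * A := by
  rw [← ((Commute.one_left A).smul_left s).mul_self_sub_mul_self_eq', smul_mul_smul_comm,
    Matrix.one_mul, sq]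

theorem det_neg_smul_one_sub (A : Matrix ι ι R) (s : R) :
    ((-s) • 1 - A).det = (-1) ^ Fintype.card ι * (s • 1 + A).det := by
  rw [← det_neg, neg_add, neg_smul, sub_eq_add_neg]

def nambuMatrix (A : Matrix ι ι R) (c : R) : Matrix (ι ⊕ ι) (ι ⊕ ι) R :=
  fromBlocks A (c • 1) (-(c • 1)) (-A)

theorem nambuMatrix_mul_self (A : Matrix ι ι R) (c : R) :
    nambuMatrix A c * nambuMatrix A c =
      fromBlocks (A * A - c ^ 2 • 1) 0 0 (A * A - c ^ 2 • 1) := by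
  simp only [nambuMatrix, fromBlocks_multiply, Matrix.mul_smul, Matrix.smul_mul, Matrix.mul_neg,
    Matrix.neg_mul, Matrix.mul_one, Matrix.one_mul, smul_neg, neg_neg, smul_smul, sq]
  congr 1 <;> abel

omit [Fintype ι] in
theorem nambuMatrix_submatrix_sumComm (A : Matrix ι ι R) (c : R) :
    (nambuMatrix A c).submatrix (Equiv.sumComm ι ι) (Equiv.sumComm ι ι) = -nambuMatrix A c := by
  ext (i | i) (j | j) <;> simp [nambuMatrix]

theorem det_smul_one_add_nambuMatrix (A : Matrix ι ι R) (c μ : R) :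
    (μ • 1 + nambuMatrix A c).det = (μ • 1 - nambuMatrix A c).det := by
  rw [← det_reindexAlgEquiv R R (Equiv.sumComm ι ι), map_add, map_smul, map_one,
    coe_reindexAlgEquiv, reindex_apply, Equiv.sumComm_symm, nambuMatrix_submatrix_sumComm,
    sub_eq_add_neg]

theorem det_smul_one_sub_nambuMatrix_sq (A : Matrix ι ι R) (c μ : R) :
    (μ • 1 - nambuMatrix A c).det ^ 2 = ((μ ^ 2 + c ^ 2) • 1 - A * A).det ^ 2 := by
  have hblocks : μ ^ 2 • 1 - (A * A - c ^ 2 • 1) = (μ ^ 2 + c ^ 2) • 1 - A * A := by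
    rw [add_smul]; abel
  calc (μ • 1 - nambuMatrix A c).det ^ 2
      = (μ • 1 - nambuMatrix A c).det * (μ • 1 + nambuMatrix A c).det := by
        rw [det_smul_one_add_nambuMatrix, sq]
    _ = ((μ ^ 2 + c ^ 2) • 1 - A * A).det ^ 2 := by
      rw [← det_mul, smul_one_sub_mul_smul_one_add, nambuMatrix_mul_self, ← fromBlocks_one,
        fromBlocks_smul, sub_eq_add_neg, fromBlocks_neg, fromBlocks_add, smul_zero, neg_zero,
        add_zero, ← sub_eq_add_neg, hblocks, det_fromBlocks_zero₂₁]
      exact (sq _).symm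

end CommRing

theorem det_smul_one_sub_mul_self_eq_zero_iff [Field K] [IsAlgClosed K] (A : Matrix ι ι K)
    (μ : K) :
    (μ • 1 - A * A).det = 0 ↔ ∃ ω, (ω • 1 - A).det = 0 ∧ ω ^ 2 = μ := by
  constructor
  · intro h
    obtain ⟨s, rfl⟩ := IsAlgClosed.exists_pow_nat_eq μ two_pos
    rw [← smul_one_sub_mul_smul_one_add, det_mul, mul_eq_zero] at h
    rcases h with h | h
    · exact ⟨s, h, rfl⟩
    · exact ⟨-s, by rw [det_neg_smul_one_sub, h, mul_zero], neg_sq s⟩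
  · rintro ⟨ω, hω, rfl⟩
    rw [← smul_one_sub_mul_smul_one_add, det_mul, hω, zero_mul]

end Matrix

theorem nambu_scalar_pairing_spectrum_general {n : ℕ}
    (A : Matrix (Fin n) (Fin n) ℂ) (c : ℝ)
    (M : Matrix (Fin n ⊕ Fin n) (Fin n ⊕ Fin n) ℂ)
    (hM : M = Matrix.fromBlocks A ((c : ℂ) • (1 : Matrix (Fin n) (Fin n) ℂ))
                (-((c : ℂ) • (1 : Matrix (Fin n) (Fin n) ℂ))) (-A))
    (lam : ℂ) :
    (∃ w : Fin n ⊕ Fin n → ℂ, w ≠ 0 ∧ M.mulVec w = lam • w) ↔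
      (∃ ω : ℂ, (∃ v : Fin n → ℂ, v ≠ 0 ∧ A.mulVec v = ω • v) ∧
        lam ^ 2 = ω ^ 2 - (c : ℂ) ^ 2) := by
  change M = nambuMatrix A (c : ℂ) at hM
  simp_rw [exists_mulVec_eq_smul_iff_det_smul_one_sub_eq_zero]
  rw [hM, ← pow_eq_zero_iff two_ne_zero, det_smul_one_sub_nambuMatrix_sq,
    pow_eq_zero_iff two_ne_zero, det_smul_one_sub_mul_self_eq_zero_iff]
  refine exists_congr fun ω => and_congr_right' ?_
  rw [eq_sub_iff_add_eq, eq_comm]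

/-- **Spectrum of the Nambu matrix with Hermitian block and real scalar pairing.**
For Hermitian `A` and real `c`, `λ` is an eigenvalue of `M = [[A, cI], [−cI, −A]]`
if and only if there exists an eigenvalue `ω` of `A` with `λ² = ω² − c²`. -/
theorem nambu_scalar_pairing_spectrum {n : ℕ}
    (A : Matrix (Fin n) (Fin n) ℂ) (hA : A.IsHermitian) (c : ℝ)
    (M : Matrix (Fin n ⊕ Fin n) (Fin n ⊕ Fin n) ℂ)
    (hM : M = Matrix.fromBlocks A ((c : ℂ) • (1 : Matrix (Fin n) (Fin n) ℂ))
                (-((c : ℂ) • (1 : Matrix (Fin n) (Fin n) ℂ))) (-A))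
    (lam : ℂ) :
    (∃ w : Fin n ⊕ Fin n → ℂ, w ≠ 0 ∧ M.mulVec w = lam • w) ↔
      (∃ ω : ℂ, (∃ v : Fin n → ℂ, v ≠ 0 ∧ A.mulVec v = ω • v) ∧
        lam ^ 2 = ω ^ 2 - (c : ℂ) ^ 2) :=
  nambu_scalar_pairing_spectrum_general A c M hM lam
end
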